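/- Let E ⊂ ℝⁿ be Lebesgue measurable with 0 < |E| < ∞, let κ ≥ 0, and let q : E → (1,∞) be measurable with 1 < q⁻ := ess inf q ≤ ess sup q =: q⁺ < ∞. Then the map λ : ℝ^{N×n} → ℝ^{N×n} defined by λ(Q) := (⨍_E (κ + |Q|)^{(q(x)−2)/2} dx) · Q is surjective; that is, for every G ∈ ℝ^{N×n} there exists Q ∈ ℝ^{N×n} with ⨍_E (κ + |Q|)^{(q(x)−2)/2} Q dx = G. -/

import Mathlib

open MeasureTheory Set Filter Topology

/-!
Write `p = (q - 2) / 2`, so that `-1 < p⁻ ≤ p ≤ p⁺ < ∞`. Since `λ(Q)` is a nonnegative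
multiple of `Q`, it suffices to find `t ≥ 0` with `F t = ‖G‖`, where
`F t := ⨍_E t (κ + t)^{p(x)} dx`, and take `Q = (t / ‖G‖) G`. Pointwise
`t (κ + t)^p ≤ (κ + t)^{1 + p}` with `1 + p > 0`, so the integrand is continuous on `[0, ∞)`,
vanishes at `0` and is locally uniformly bounded; by dominated convergence `F` is continuous
with `F 0 = 0`. For `t ≥ max κ 1` the integrand is at least `(κ + t)^{1 + p⁻} / 2`, so
`F t → ∞`, and the intermediate value theorem gives `t`.
-/

namespace Real

lemma rpow_le_max_one_rpow {x y s r : ℝ} (hx : 0 ≤ x) (hxy : x ≤ y) (hs : 0 ≤ s)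
    (hsr : s ≤ r) : x ^ s ≤ max 1 (y ^ r) := by
  rcases le_total x 1 with hx1 | hx1
  · exact le_max_of_le_left (rpow_le_one hx hx1 hs)
  · exact le_max_of_le_right <|
      (rpow_le_rpow_of_exponent_le hx1 hsr).trans (rpow_le_rpow hx hxy (hs.trans hsr))

variable {κ t p : ℝ}

lemma mul_rpow_add_le_rpow_one_add (hκ : 0 ≤ κ) (ht : 0 ≤ t) (hp : -1 < p) :
    t * (κ + t) ^ p ≤ (κ + t) ^ (1 + p) := by
  have hκt : 0 ≤ κ + t := by linarith
  rw [rpow_add' hκt (by linarith), rpow_one]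
  exact mul_le_mul_of_nonneg_right (by linarith) (rpow_nonneg hκt p)

lemma mul_rpow_add_le_max {T pu : ℝ} (hκ : 0 ≤ κ) (ht : 0 ≤ t) (htT : t ≤ T) (hp : -1 < p)
    (hpu : p ≤ pu) : t * (κ + t) ^ p ≤ max 1 ((κ + T) ^ (1 + pu)) :=
  (mul_rpow_add_le_rpow_one_add hκ ht hp).trans <|
    rpow_le_max_one_rpow (by linarith) (by linarith) (by linarith) (by linarith)

lemma rpow_one_add_div_two_le_mul_rpow_add {pl : ℝ} (hκt : κ ≤ t) (h1 : 1 ≤ κ + t)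
    (hpl : pl ≤ p) : (κ + t) ^ (1 + pl) / 2 ≤ t * (κ + t) ^ p := by
  rw [rpow_add (by linarith), rpow_one]
  have := rpow_le_rpow_of_exponent_le h1 hpl
  nlinarith [rpow_nonneg (zero_le_one.trans h1) pl]

lemma continuousOn_mul_rpow_add (hκ : 0 ≤ κ) (hp : -1 < p) :
    ContinuousOn (fun t : ℝ => t * (κ + t) ^ p) (Ici 0) := by
  rcases hκ.eq_or_lt with rfl | hκ
  · refine (continuous_rpow_const (by linarith : 0 ≤ 1 + p)).continuousOn.congr fun t ht => ?_
    show t * (0 + t) ^ p = t ^ (1 + p)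
    rw [zero_add, rpow_add' (mem_Ici.mp ht) (by linarith), rpow_one]
  · exact continuousOn_id.mul <| ContinuousOn.rpow_const (f := fun t => κ + t) (by fun_prop)
      fun t ht => Or.inl (by linarith [mem_Ici.mp ht])

end Real

section RpowIntegral

variable {α : Type*} [MeasurableSpace α] {μ : Measure α} {κ pl pu : ℝ} {p : α → ℝ}

lemma aestronglyMeasurable_mul_rpow_add (hp : AEMeasurable p μ) (κ t : ℝ) :
    AEStronglyMeasurable (fun x => t * (κ + t) ^ p x) μ :=
  ((aemeasurable_const.pow hp).const_mul t).aestronglyMeasurable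

lemma ae_norm_mul_rpow_add_le (hκ : 0 ≤ κ) (hb : ∀ᵐ x ∂μ, pl ≤ p x ∧ p x ≤ pu)
    (hpl : -1 < pl) {t T : ℝ} (ht : 0 ≤ t) (htT : t ≤ T) :
    ∀ᵐ x ∂μ, ‖t * (κ + t) ^ p x‖ ≤ max 1 ((κ + T) ^ (1 + pu)) := by
  filter_upwards [hb] with x hx
  rw [Real.norm_of_nonneg (mul_nonneg ht (Real.rpow_nonneg (by linarith) _))]
  exact Real.mul_rpow_add_le_max hκ ht htT (by linarith [hx.1]) hx.2

variable [IsProbabilityMeasure μ]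

lemma continuousOn_integral_mul_rpow_add (hp : AEMeasurable p μ) (hκ : 0 ≤ κ)
    (hb : ∀ᵐ x ∂μ, pl ≤ p x ∧ p x ≤ pu) (hpl : -1 < pl) (T : ℝ) :
    ContinuousOn (fun t => ∫ x, t * (κ + t) ^ p x ∂μ) (Icc 0 T) := by
  refine continuousOn_of_dominated (bound := fun _ => max 1 ((κ + T) ^ (1 + pu)))
    (fun t _ => aestronglyMeasurable_mul_rpow_add hp κ t)
    (fun t ht => ae_norm_mul_rpow_add_le hκ hb hpl ht.1 ht.2) (integrable_const _) ?_
  filter_upwards [hb] with x hx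
  exact (Real.continuousOn_mul_rpow_add hκ (by linarith [hx.1])).mono Icc_subset_Ici_self

lemma tendsto_integral_mul_rpow_add_atTop (hp : AEMeasurable p μ) (hκ : 0 ≤ κ)
    (hb : ∀ᵐ x ∂μ, pl ≤ p x ∧ p x ≤ pu) (hpl : -1 < pl) :
    Tendsto (fun t => ∫ x, t * (κ + t) ^ p x ∂μ) atTop atTop := by
  have hgrowth : Tendsto (fun t : ℝ => (κ + t) ^ (1 + pl) / 2) atTop atTop :=
    ((tendsto_rpow_atTop (by linarith)).comp
      (tendsto_atTop_add_const_left _ κ tendsto_id)).atTop_div_const two_pos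
  refine tendsto_atTop_mono' atTop ?_ hgrowth
  filter_upwards [eventually_ge_atTop (max κ 1)] with t ht
  have ht0 : 0 ≤ t := zero_le_one.trans (le_of_max_le_right ht)
  have hint : Integrable (fun x => t * (κ + t) ^ p x) μ :=
    .of_bound (aestronglyMeasurable_mul_rpow_add hp κ t) _
      (ae_norm_mul_rpow_add_le hκ hb hpl ht0 le_rfl)
  calc (κ + t) ^ (1 + pl) / 2 = ∫ _x, (κ + t) ^ (1 + pl) / 2 ∂μ := by simp
    _ ≤ ∫ x, t * (κ + t) ^ p x ∂μ := integral_mono_ae (integrable_const _) hint <| by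
      filter_upwards [hb] with x hx
      exact Real.rpow_one_add_div_two_le_mul_rpow_add (le_of_max_le_left ht)
        (by linarith [le_of_max_le_right ht]) hx.1

lemma exists_integral_mul_rpow_add_eq (hp : AEMeasurable p μ) (hκ : 0 ≤ κ)
    (hb : ∀ᵐ x ∂μ, pl ≤ p x ∧ p x ≤ pu) (hpl : -1 < pl) {s : ℝ} (hs : 0 ≤ s) :
    ∃ t, 0 ≤ t ∧ ∫ x, t * (κ + t) ^ p x ∂μ = s := by
  obtain ⟨T, hsT, hT⟩ :=
    ((tendsto_integral_mul_rpow_add_atTop hp hκ hb hpl).eventually_ge_atTop s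
      |>.and (eventually_ge_atTop 0)).exists
  obtain ⟨t, ht, hts⟩ := intermediate_value_Icc hT
    (continuousOn_integral_mul_rpow_add hp hκ hb hpl T) ⟨by simpa using hs, hsT⟩
  exact ⟨t, ht.1, hts⟩

end RpowIntegral

section FiniteMeasure

variable {α : Type*} [MeasurableSpace α] {μ : Measure α} [IsFiniteMeasure μ] [NeZero μ]
  {κ pl pu : ℝ} {p : α → ℝ}

lemma exists_mul_average_rpow_add_eq (hp : AEMeasurable p μ) (hκ : 0 ≤ κ)
    (hb : ∀ᵐ x ∂μ, pl ≤ p x ∧ p x ≤ pu) (hpl : -1 < pl) {s : ℝ} (hs : 0 ≤ s) :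
    ∃ t, 0 ≤ t ∧ t * ⨍ x, (κ + t) ^ p x ∂μ = s := by
  obtain ⟨t, ht, hts⟩ := exists_integral_mul_rpow_add_eq (hp.smul_measure (μ univ)⁻¹) hκ
    (Measure.ae_smul_measure hb _) hpl hs
  exact ⟨t, ht, by rwa [average_eq', ← integral_const_mul]⟩

theorem exists_average_rpow_add_norm_smul_eq {V : Type*} [NormedAddCommGroup V]
    [NormedSpace ℝ V] (hp : AEMeasurable p μ) (hκ : 0 ≤ κ)
    (hb : ∀ᵐ x ∂μ, pl ≤ p x ∧ p x ≤ pu) (hpl : -1 < pl) (G : V) :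
    ∃ Q : V, (⨍ x, (κ + ‖Q‖) ^ p x ∂μ) • Q = G := by
  rcases eq_or_ne G 0 with rfl | hG
  · exact ⟨0, smul_zero _⟩
  have hG' : 0 < ‖G‖ := norm_pos_iff.mpr hG
  obtain ⟨t, ht, hts⟩ := exists_mul_average_rpow_add_eq hp hκ hb hpl hG'.le
  refine ⟨(t / ‖G‖) • G, ?_⟩
  rw [norm_smul, Real.norm_of_nonneg (div_nonneg ht hG'.le), div_mul_cancel₀ _ hG'.ne', smul_smul,
    mul_div_assoc', mul_comm, hts, div_self hG'.ne', one_smul]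

end FiniteMeasure

theorem stmt10 (N n : ℕ) (E : Set (EuclideanSpace ℝ (Fin n)))
    (h0 : 0 < volume E) (hfin : volume E < ⊤)
    (κ : ℝ) (hκ : 0 ≤ κ)
    (q : EuclideanSpace ℝ (Fin n) → ℝ) (hq : Measurable q)
    (qminus qplus : ℝ) (h1 : 1 < qminus)
    (hb : ∀ᵐ x ∂(volume.restrict E), qminus ≤ q x ∧ q x ≤ qplus) :
    ∀ G : EuclideanSpace ℝ (Fin N × Fin n),
      ∃ Q : EuclideanSpace ℝ (Fin N × Fin n),
        (⨍ x in E, (κ + ‖Q‖) ^ ((q x - 2) / 2)) • Q = G := by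
  have : IsFiniteMeasure (volume.restrict E) := isFiniteMeasure_restrict.mpr hfin.ne
  have : NeZero (volume.restrict E) := ⟨by simpa [Measure.restrict_eq_zero] using h0.ne'⟩
  refine exists_average_rpow_add_norm_smul_eq (pl := (qminus - 2) / 2) (pu := (qplus - 2) / 2)
    ((hq.sub_const 2).div_const 2).aemeasurable hκ ?_ (by linarith)
  filter_upwards [hb] with x hx
  constructor <;> linarith [hx.1, hx.2]
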